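/- Let (K,D,⋆) be a complete probabilistic metric space with ⋆ continuous and sup-continuous. If the metric space (Lip¹_⋆(K,Δ⁺), d_∞) of probabilistic 1-Lipschitz maps with the uniform modified Lévy distance is compact, then (K,D,⋆) is compact. (Hint from the proof: for x ∈ K, the map δ_x : y ↦ D(x,y) is probabilistic 1-Lipschitz, and a uniformly Cauchy subsequence of (δ_{x_n}) forces (x_n) to have a Cauchy subsequence.) -/
import Mathlib


open Filter Topology

noncomputable section

/-- `Δ⁺`: distribution functions `F : [-∞,∞] → [0,1]`, nondecreasing, left-continuous
on `ℝ`, with `F(-∞)=0`, `F(+∞)=1` and `F(0)=0`. -/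
def IsDistFun (F : EReal → ℝ) : Prop :=
  Monotone F ∧ (∀ t, F t ∈ Set.Icc (0:ℝ) 1) ∧
  (∀ x : ℝ, ContinuousWithinAt F (Set.Iio (x : EReal)) (x : EReal)) ∧
  F ⊥ = 0 ∧ F ⊤ = 1 ∧ F (0 : EReal) = 0

/-- The step function `H_a`. -/
def Hstep (a : ℝ) : EReal → ℝ := fun t => if t ≤ (a : EReal) then 0 else 1

/-- `H₀`. -/
def H0 : EReal → ℝ := Hstep 0

/-- `H_∞`. -/
def Hinf : EReal → ℝ := fun t => if t = ⊤ then 1 else 0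

/-- The condition `A(F,G;h)` : for all `t ∈ (0,1/h)`, `G(t) ≤ F(t+h)+h`. -/
def levyCond (F G : EReal → ℝ) (h : ℝ) : Prop :=
  ∀ t : ℝ, 0 < t → t < 1 / h → G (t : EReal) ≤ F ((t + h : ℝ) : EReal) + h

def levySet (F G : EReal → ℝ) : Set ℝ :=
  {h : ℝ | 0 < h ∧ h ≤ 1 ∧ levyCond F G h ∧ levyCond G F h}

/-- The modified Lévy distance. -/
def dL (F G : EReal → ℝ) : ℝ := sInf (levySet F G)

/-- Weak convergence: pointwise convergence at each (real) continuity point of the limit. -/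
def WeakConv (F : ℕ → EReal → ℝ) (G : EReal → ℝ) : Prop :=
  ∀ t : ℝ, ContinuousAt G (t : EReal) →
    Tendsto (fun n => F n (t : EReal)) atTop (𝓝 (G (t : EReal)))

abbrev TriOp := (EReal → ℝ) → (EReal → ℝ) → (EReal → ℝ)

/-- A triangle function on `Δ⁺`. -/
def IsTriangleFn (star : TriOp) : Prop :=
  (∀ F L, IsDistFun F → IsDistFun L → IsDistFun (star F L)) ∧
  (∀ F L, IsDistFun F → IsDistFun L → star F L = star L F) ∧
  (∀ F L K, IsDistFun F → IsDistFun L → IsDistFun K →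
    star F (star L K) = star (star F L) K) ∧
  (∀ F, IsDistFun F → star F H0 = F) ∧
  (∀ F L K, IsDistFun F → IsDistFun L → IsDistFun K → F ≤ L → star F K ≤ star L K)

/-- `⋆` is continuous with respect to weak convergence. -/
def StarContinuous (star : TriOp) : Prop :=
  ∀ (Fn Ln : ℕ → EReal → ℝ) (F L : EReal → ℝ),
    (∀ n, IsDistFun (Fn n)) → (∀ n, IsDistFun (Ln n)) →
    IsDistFun F → IsDistFun L →
    WeakConv Fn F → WeakConv Ln L →
    WeakConv (fun n => star (Fn n) (Ln n)) (star F L)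

/-- `⋆` is sup-continuous. -/
def StarSupContinuous (star : TriOp) : Prop :=
  ∀ (I : Type) (_ : Nonempty I) (F : I → EReal → ℝ) (L : EReal → ℝ),
    (∀ i, IsDistFun (F i)) → IsDistFun L →
    (fun t => ⨆ i, star (F i) L t) = star (fun t => ⨆ i, F i t) L

/-- A probabilistic metric space `(G, D, ⋆)`. -/
structure PMSpace (G : Type) where
  star : TriOp
  D : G → G → EReal → ℝ
  star_tri : IsTriangleFn star
  D_mem : ∀ p q, IsDistFun (D p q)
  D_eq_iff : ∀ p q, D p q = H0 ↔ p = q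
  D_symm : ∀ p q, D p q = D q p
  D_tri : ∀ p q r, star (D p q) (D q r) ≤ D p r

/-- Probabilistic 1-Lipschitz map. -/
def PLip {G : Type} (M : PMSpace G) (f : G → EReal → ℝ) : Prop :=
  (∀ x, IsDistFun (f x)) ∧ ∀ x y, M.star (M.D x y) (f y) ≤ f x

/-- Probabilistically continuous map. -/
def PCont {G : Type} (M : PMSpace G) (f : G → EReal → ℝ) : Prop :=
  (∀ x, IsDistFun (f x)) ∧
  ∀ (z : G) (zn : ℕ → G),
    WeakConv (fun n => M.D (zn n) z) H0 →
    WeakConv (fun n => f (zn n)) (f z)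

/-- The uniform modified Lévy distance `d_∞`. -/
def dInf {G : Type} (f g : G → EReal → ℝ) : ℝ := ⨆ x, dL (f x) (g x)

/-- Probabilistic Cauchy sequence: `D(z_n,z_p)(t) → H₀(t)` for all real `t`. -/
def PCauchy {G : Type} (M : PMSpace G) (z : ℕ → G) : Prop :=
  ∀ t : ℝ, Tendsto (fun np : ℕ × ℕ => M.D (z np.1) (z np.2) (t : EReal))
    atTop (𝓝 (H0 (t : EReal)))

def PConvTo {G : Type} (M : PMSpace G) (z : ℕ → G) (w : G) : Prop :=
  ∀ t : ℝ, Tendsto (fun n => M.D (z n) w (t : EReal)) atTop (𝓝 (H0 (t : EReal)))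

def PComplete {G : Type} (M : PMSpace G) : Prop :=
  ∀ z : ℕ → G, PCauchy M z → ∃ w, PConvTo M z w

/-- Compactness: complete and every strong `t`-neighborhood cover has a finite subcover. -/
def PCompact {G : Type} (M : PMSpace G) : Prop :=
  PComplete M ∧ ∀ t : ℝ, 0 < t → ∃ A : Finset G, ∀ x : G, ∃ a ∈ A, M.D a x (t : EReal) > 1 - t

section Aux

variable {F G K' : EReal → ℝ}

lemma H0_bdd : ∀ t, H0 t ∈ Set.Icc (0:ℝ) 1 := by
  intro t
  unfold H0 Hstep
  split <;> norm_num

lemma H0_pos {u : ℝ} (hu : 0 < u) : H0 (u : EReal) = 1 := by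
  unfold H0 Hstep
  rw [if_neg]
  rw [not_le]
  exact_mod_cast hu

lemma one_mem_levySet (hF : ∀ t, F t ∈ Set.Icc (0:ℝ) 1)
    (hG : ∀ t, G t ∈ Set.Icc (0:ℝ) 1) : (1:ℝ) ∈ levySet F G := by
  refine ⟨one_pos, le_refl 1, ?_, ?_⟩
  · intro t ht ht'
    have h1 := (hG (t : EReal)).2
    have h2 := (hF ((t + 1 : ℝ) : EReal)).1
    linarith
  · intro t ht ht'
    have h1 := (hF (t : EReal)).2
    have h2 := (hG ((t + 1 : ℝ) : EReal)).1
    linarith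

lemma levySet_bddBelow : BddBelow (levySet F G) :=
  ⟨0, fun h hh => hh.1.le⟩

lemma dL_le_one (hF : ∀ t, F t ∈ Set.Icc (0:ℝ) 1)
    (hG : ∀ t, G t ∈ Set.Icc (0:ℝ) 1) : dL F G ≤ 1 :=
  csInf_le levySet_bddBelow (one_mem_levySet hF hG)

lemma dL_nonneg (hF : ∀ t, F t ∈ Set.Icc (0:ℝ) 1)
    (hG : ∀ t, G t ∈ Set.Icc (0:ℝ) 1) : 0 ≤ dL F G :=
  le_csInf ⟨1, one_mem_levySet hF hG⟩ (fun b hb => hb.1.le)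

lemma dL_symm : dL F G = dL G F := by
  unfold dL levySet
  congr 1
  ext h
  constructor <;> rintro ⟨a, b, c, d⟩ <;> exact ⟨a, b, d, c⟩

lemma levyCond_comp {h k : ℝ} (hFG : levyCond F G h) (hGK : levyCond G K' k)
    (hh : 0 < h) (hk : 0 < k) (hh1 : h ≤ 1) (hk1 : k ≤ 1) (hsum : h + k ≤ 1) :
    levyCond F K' (h + k) := by
  intro t ht ht'
  have htk : t * (h + k) < 1 := by
    rw [lt_div_iff₀ (by linarith)] at ht'
    exact ht'
  have h1 : t < 1 / k := by
    rw [lt_div_iff₀ hk]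
    nlinarith
  have hhk : h * (h + k) ≤ 1 := by nlinarith
  have key2 : (t + k) * h * (h + k) < h + k := by
    nlinarith [mul_lt_mul_of_pos_right htk hh, mul_le_mul_of_nonneg_left hhk hk.le]
  have h2 : t + k < 1 / h := by
    rw [lt_div_iff₀ hh]
    by_contra hcon
    push_neg at hcon
    have := mul_le_mul_of_nonneg_right hcon (add_pos hh hk).le
    nlinarith
  have e1 := hGK t ht h1
  have e2 := hFG (t + k) (by linarith) h2
  rw [show (t + k + h : ℝ) = (t + (h + k) : ℝ) from by ring] at e2
  linarith

lemma dL_le_add {h k : ℝ} (hF : ∀ t, F t ∈ Set.Icc (0:ℝ) 1)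
    (hK : ∀ t, K' t ∈ Set.Icc (0:ℝ) 1)
    (hm : h ∈ levySet F G) (km : k ∈ levySet G K') : dL F K' ≤ h + k := by
  rcases le_or_gt (h + k) 1 with hle | hgt
  · refine csInf_le levySet_bddBelow ?_
    refine ⟨add_pos hm.1 km.1, hle, ?_, ?_⟩
    · exact levyCond_comp hm.2.2.1 km.2.2.1 hm.1 km.1 hm.2.1 km.2.1 hle
    · have := levyCond_comp km.2.2.2 hm.2.2.2 km.1 hm.1 km.2.1 hm.2.1
        (by linarith)
      rw [add_comm k h] at this
      exact this
  · exact (dL_le_one hF hK).trans hgt.le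

lemma dL_triangle (hF : ∀ t, F t ∈ Set.Icc (0:ℝ) 1)
    (hG : ∀ t, G t ∈ Set.Icc (0:ℝ) 1)
    (hK : ∀ t, K' t ∈ Set.Icc (0:ℝ) 1) : dL F K' ≤ dL F G + dL G K' := by
  refine le_of_forall_pos_le_add ?_
  intro ε hε
  obtain ⟨h, hm, hlt⟩ := Real.lt_sInf_add_pos ⟨1, one_mem_levySet hF hG⟩ (half_pos hε)
  obtain ⟨k, km, klt⟩ := Real.lt_sInf_add_pos ⟨1, one_mem_levySet hG hK⟩ (half_pos hε)
  have := dL_le_add hF hK hm km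
  unfold dL at this ⊢
  linarith

lemma dL_H0_lt {t : ℝ} (hF : ∀ u, F u ∈ Set.Icc (0:ℝ) 1)
    (ht0 : 0 < t) (ht1 : t ≤ 1) (hlt : dL F H0 < t) : 1 - t < F (t : EReal) := by
  obtain ⟨h, hm, hht⟩ := exists_lt_of_csInf_lt ⟨1, one_mem_levySet hF H0_bdd⟩ hlt
  have hcond := hm.2.2.1
  have hh0 : 0 < h := hm.1
  have hh1 : h ≤ 1 := hm.2.1
  have hu0 : 0 < t - h := by linarith
  have hu1 : t - h < 1 / h := by
    have : (1:ℝ) ≤ 1 / h := by rw [le_div_iff₀ hh0]; linarith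
    linarith
  have := hcond (t - h) hu0 hu1
  rw [H0_pos hu0] at this
  have ecast : ((t - h + h : ℝ) : EReal) = (t : EReal) := by norm_num
  rw [ecast] at this
  linarith

lemma delta_plip {K : Type} (M : PMSpace K) (x0 : K) :
    PLip M (fun y => M.D x0 y) := by
  refine ⟨fun y => M.D_mem x0 y, fun x y => ?_⟩
  have hcomm := M.star_tri.2.1 (M.D x y) (M.D x0 y) (M.D_mem _ _) (M.D_mem _ _)
  simp only []
  rw [hcomm, M.D_symm x y]
  exact M.D_tri x0 y x

end Aux

/-- Arzela-Ascoli, converse implication: if `(Lip¹_⋆(K,Δ⁺), d_∞)` is (sequentially)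
compact, then the complete probabilistic metric space `(K,D,⋆)` is compact. -/
theorem stmt18 {K : Type} (M : PMSpace K) (hc : StarContinuous M.star)
    (hsup : StarSupContinuous M.star) (hcompl : PComplete M)
    (hLip : ∀ f : ℕ → K → EReal → ℝ, (∀ n, PLip M (f n)) →
      ∃ (φ : ℕ → ℕ) (g : K → EReal → ℝ), StrictMono φ ∧ PLip M g ∧
        Tendsto (fun n => dInf (f (φ n)) g) atTop (𝓝 0)) :
    PCompact M := by
  refine ⟨hcompl, ?_⟩
  have key : ∀ s : ℝ, 0 < s → s ≤ 1 →
      ∃ A : Finset K, ∀ x : K, ∃ a ∈ A, M.D a x (s : EReal) > 1 - s := by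
    intro s hs0 hs1
    by_contra hbad
    push_neg at hbad
    classical
    choose pick hpick using hbad
    set A : ℕ → Finset K := fun n =>
      Nat.rec (motive := fun _ => Finset K) ∅ (fun _ B => insert (pick B) B) n
      with hA
    set x : ℕ → K := fun n => pick (A n) with hx
    have hAsucc : ∀ n, A (n + 1) = insert (x n) (A n) := fun n => rfl
    have hxmem : ∀ m n, m < n → x m ∈ A n := by
      intro m n hmn
      induction n with
      | zero => omega
      | succ k ih =>
        rw [hAsucc]
        rcases Nat.lt_succ_iff_lt_or_eq.mp hmn with h | h
        · exact Finset.mem_insert_of_mem (ih h)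
        · subst h; exact Finset.mem_insert_self _ _
    have hsep : ∀ m n, m < n → M.D (x m) (x n) (s : EReal) ≤ 1 - s :=
      fun m n hmn => hpick (A n) (x m) (hxmem m n hmn)
    set f : ℕ → K → EReal → ℝ := fun n y => M.D (x n) y with hfdef
    obtain ⟨φ, g, hφ, hg, hconv⟩ := hLip f (fun n => delta_plip M (x n))
    have hgb : ∀ y, ∀ u, g y u ∈ Set.Icc (0:ℝ) 1 := fun y => (hg.1 y).2.1
    have hfb : ∀ n y u, f n y u ∈ Set.Icc (0:ℝ) 1 :=
      fun n y => (M.D_mem (x n) y).2.1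
    have hbdd : ∀ n : ℕ, BddAbove (Set.range fun y => dL (f n y) (g y)) := by
      intro n
      refine ⟨1, ?_⟩
      rintro r ⟨y, rfl⟩
      exact dL_le_one (hfb n y) (hgb y)
    have hle : ∀ n y, dL (f n y) (g y) ≤ dInf (f n) g :=
      fun n y => le_ciSup (hbdd n) y
    have hev := hconv.eventually (gt_mem_nhds (by linarith : (0:ℝ) < s / 2))
    obtain ⟨N, hN⟩ := eventually_atTop.mp hev
    have h1 : dInf (f (φ N)) g < s / 2 := hN N le_rfl
    have h2 : dInf (f (φ (N + 1))) g < s / 2 := hN (N + 1) (by omega)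
    set m := φ N with hm
    set n' := φ (N + 1) with hn'
    have hmn : m < n' := hφ (Nat.lt_succ_self N)
    -- triangle at point x m
    have htri : dL (f n' (x m)) (f m (x m)) ≤
        dL (f n' (x m)) (g (x m)) + dL (g (x m)) (f m (x m)) :=
      dL_triangle (hfb n' (x m)) (hgb (x m)) (hfb m (x m))
    have hsymm : dL (g (x m)) (f m (x m)) = dL (f m (x m)) (g (x m)) := dL_symm
    have hfmm : f m (x m) = H0 := (M.D_eq_iff (x m) (x m)).mpr rfl
    have hlt : dL (f n' (x m)) H0 < s := by
      rw [← hfmm]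
      calc dL (f n' (x m)) (f m (x m))
          ≤ dL (f n' (x m)) (g (x m)) + dL (g (x m)) (f m (x m)) := htri
        _ = dL (f n' (x m)) (g (x m)) + dL (f m (x m)) (g (x m)) := by rw [hsymm]
        _ ≤ dInf (f n') g + dInf (f m) g := add_le_add (hle n' _) (hle m _)
        _ < s / 2 + s / 2 := add_lt_add h2 h1
        _ = s := by ring
    have hgt : 1 - s < f n' (x m) (s : EReal) :=
      dL_H0_lt (hfb n' (x m)) hs0 hs1 hlt
    have hDsymm : M.D (x n') (x m) = M.D (x m) (x n') := M.D_symm _ _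
    have : M.D (x n') (x m) (s : EReal) ≤ 1 - s := by
      rw [hDsymm]; exact hsep m n' hmn
    have : f n' (x m) (s : EReal) ≤ 1 - s := this
    linarith
  intro t ht
  rcases le_or_gt t 1 with ht1 | ht1
  · exact key t ht ht1
  · obtain ⟨A, hA⟩ := key 1 one_pos le_rfl
    refine ⟨A, fun x => ?_⟩
    obtain ⟨a, haA, ha⟩ := hA x
    refine ⟨a, haA, ?_⟩
    have hmono := (M.D_mem a x).1 (show ((1:ℝ):EReal) ≤ (t:EReal) from
      EReal.coe_le_coe_iff.mpr ht1.le)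
    have : (0:ℝ) < M.D a x ((1:ℝ):EReal) := by linarith
    calc 1 - t < 0 := by linarith
      _ < M.D a x ((1:ℝ):EReal) := this
      _ ≤ M.D a x (t:EReal) := hmono
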